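/- Let X be a Banach space with the C-Schur property, where C > 0. Then for every bounded sequence (x_n) in X one has ca_ρ((x_n)) ≤ C·δ((x_n)). -/

import Mathlib

open Filter Metric Topology Pointwise NormedSpace

set_option maxHeartbeats 1000000
set_option synthInstance.maxHeartbeats 400000

noncomputable section

/-- `ca (x_k) = inf_n diam {x_k : k ≥ n}`: measures how far `(x_k)` is from being norm Cauchy. -/
def ca {Z : Type*} [NormedAddCommGroup Z] (x : ℕ → Z) : ℝ :=
  ⨅ n : ℕ, Metric.diam (x '' Set.Ici n)

/-- `δ (x_k) = sup_{f ∈ B_{Z*}} inf_n diam {f (x_k) : k ≥ n}`: measures how far `(x_k)` is from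
being weakly Cauchy. -/
def qdelta {Z : Type*} [NormedAddCommGroup Z] [NormedSpace ℝ Z] (x : ℕ → Z) : ℝ :=
  ⨆ f : Metric.closedBall (0 : StrongDual ℝ Z) 1,
    ⨅ n : ℕ, Metric.diam ((fun k => (f : StrongDual ℝ Z) (x k)) '' Set.Ici n)

/-- `ca_ρ (x_n)`: measures how far `(x_n)` is from being Cauchy in the restriction to `X` of the
Mackey topology of `X**`; the outer supremum runs over all subsets `K` of the closed unit ball of
`X*` which are compact in the weak topology `σ(X*, X**)`. -/
def caRho {Z : Type*} [NormedAddCommGroup Z] [NormedSpace ℝ Z] (x : ℕ → Z) : ℝ :=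
  sSup { r : ℝ | ∃ K : Set (StrongDual ℝ Z),
    K ⊆ Metric.closedBall 0 1 ∧
    IsCompact (show Set (WeakSpace ℝ (StrongDual ℝ Z)) from K) ∧
    r = ⨅ n : ℕ, ⨆ j : Set.Ici n, ⨆ l : Set.Ici n, ⨆ f : K,
      |(f : StrongDual ℝ Z) (x j - x l)| }

/-! Every functional in the unit ball of `X*` is `1`-Lipschitz, so each seminorm entering `ca_ρ`
is dominated by the norm and `ca_ρ ≤ ca`; the `C`-Schur property then bounds `ca` by `C · δ`. -/

theorem ca_nonneg {Z : Type*} [NormedAddCommGroup Z] (x : ℕ → Z) : 0 ≤ ca x :=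
  Real.iInf_nonneg fun _ => diam_nonneg

section

variable {Z : Type*} [NormedAddCommGroup Z] [NormedSpace ℝ Z]

theorem iSup_abs_apply_sub_le_diam {K : Set (StrongDual ℝ Z)} (hK : K ⊆ closedBall 0 1)
    {x : ℕ → Z} (hx : Bornology.IsBounded (Set.range x)) (n : ℕ) :
    ⨆ j : Set.Ici n, ⨆ l : Set.Ici n, ⨆ f : K, |(f : StrongDual ℝ Z) (x j - x l)|
      ≤ diam (x '' Set.Ici n) := by
  refine Real.iSup_le (fun j => Real.iSup_le (fun l => Real.iSup_le (fun f => ?_)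
    diam_nonneg) diam_nonneg) diam_nonneg
  have hf : ‖(f : StrongDual ℝ Z)‖ ≤ 1 := by simpa using hK f.2
  calc |(f : StrongDual ℝ Z) (x j - x l)|
      ≤ 1 * ‖x j - x l‖ := (f : StrongDual ℝ Z).le_of_opNorm_le hf _
    _ = dist (x j) (x l) := by rw [one_mul, dist_eq_norm]
    _ ≤ diam (x '' Set.Ici n) :=
      dist_le_diam_of_mem (hx.subset (Set.image_subset_range _ _))
        ⟨j, j.2, rfl⟩ ⟨l, l.2, rfl⟩

theorem caRho_le_ca {x : ℕ → Z} (hx : Bornology.IsBounded (Set.range x)) : caRho x ≤ ca x := by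
  refine Real.sSup_le ?_ (ca_nonneg x)
  rintro r ⟨K, hK, -, rfl⟩
  refine le_ciInf fun n => (ciInf_le ⟨0, ?_⟩ n).trans (iSup_abs_apply_sub_le_diam hK hx n)
  rintro _ ⟨m, rfl⟩
  exact Real.iSup_nonneg fun _ => Real.iSup_nonneg fun _ => Real.iSup_nonneg fun _ =>
    abs_nonneg _

end

theorem caRho_le_of_CSchur {X : Type*} [NormedAddCommGroup X] [NormedSpace ℝ X]
    (C : ℝ)
    (hSchur : ∀ z : ℕ → X, (∃ M : ℝ, ∀ k, ‖z k‖ ≤ M) → ca z ≤ C * qdelta z)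
    (x : ℕ → X) (hx : ∃ M : ℝ, ∀ k, ‖x k‖ ≤ M) :
    caRho x ≤ C * qdelta x := by
  have hbdd : Bornology.IsBounded (Set.range x) :=
    isBounded_iff_forall_norm_le.2 (hx.imp fun _ hM => Set.forall_mem_range.2 hM)
  exact (caRho_le_ca hbdd).trans (hSchur x hx)
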